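/- Let G be a finite simple graph and let w be a vertex of G that is adjacent to two distinct vertices v₁ and v₂ each of degree 1. Then φ(G) ≤ Σ_{u ∈ N(w)\{v₁}} φ(G − (N[w] ∪ N[u])) + φ(G − {w, v₁, v₂}) + φ(G − N[w]). -/

import Mathlib

open SimpleGraph Finset

/-- `F` is a dissociation set of `G`: the induced subgraph `G[F]` has maximum degree at most 1,
i.e. every vertex of `F` has at most one neighbor inside `F`. -/
def IsDissocSet {V : Type*} (G : SimpleGraph V) (F : Set V) : Prop :=
  ∀ v ∈ F, ({u ∈ F | G.Adj v u} : Set V).ncard ≤ 1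

/-- A maximal dissociation set: a dissociation set not properly contained in any other
dissociation set. -/
def IsMaximalDissocSet {V : Type*} (G : SimpleGraph V) (F : Set V) : Prop :=
  IsDissocSet G F ∧ ∀ F' : Set V, IsDissocSet G F' → F ⊆ F' → F = F'

/-- `φ(G)`: the number of maximal dissociation sets of `G`. -/
noncomputable def numMaximalDissoc {V : Type*} (G : SimpleGraph V) : ℕ :=
  Set.ncard {F : Set V | IsMaximalDissocSet G F}

/-- `φ(G − S)`: the number of maximal dissociation sets of the subgraph of `G`
induced on the complement of `S`. -/
noncomputable def phiDel {V : Type*} (G : SimpleGraph V) (S : Set V) : ℕ :=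
  numMaximalDissoc (G.induce Sᶜ)

/-! Split the maximal dissociation sets `F` of `G` according to `w`. If `w ∉ F`, maximality
forces both leaves into `F`. If `w ∈ F`, maximality forces some neighbour `u` of `w` into `F`
(otherwise a leaf could be added), and then `F` meets `N[w] ∪ N[u]` exactly in `{w, u}`; for
`u = v₁` this set is just `N[w]`. In each case `F` is the union of its (fixed) trace on a deleted
set `T` and a maximal dissociation set of `G − T`, and since that trace has no neighbours
outside `T`, the latter determines `F`. -/

section

variable {V : Type*} {G : SimpleGraph V}

lemma SimpleGraph.neighborSet_eq_singleton_of_degree_eq_one {v w : V}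
    [Fintype (G.neighborSet v)] (h : G.Adj w v) (hd : G.degree v = 1) :
    G.neighborSet v = {w} := by
  obtain ⟨x, -, hx⟩ := degree_eq_one_iff_existsUnique_adj.1 hd
  ext y
  exact ⟨fun hy => (hx y hy).trans (hx w h.symm).symm, by rintro rfl; exact h.symm⟩

lemma IsDissocSet.union {A B : Set V} (hA : IsDissocSet G A) (hB : IsDissocSet G B)
    (hAB : ∀ a ∈ A, ∀ b ∈ B, ¬ G.Adj a b) : IsDissocSet G (A ∪ B) := by
  rintro v (hv | hv)
  · have : {u ∈ A ∪ B | G.Adj v u} = {u ∈ A | G.Adj v u} := Set.ext fun u =>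
      ⟨fun ⟨hu, h⟩ => ⟨hu.resolve_right fun hb => hAB v hv u hb h, h⟩,
        fun ⟨hu, h⟩ => ⟨Or.inl hu, h⟩⟩
    exact this ▸ hA v hv
  · have : {u ∈ A ∪ B | G.Adj v u} = {u ∈ B | G.Adj v u} := Set.ext fun u =>
      ⟨fun ⟨hu, h⟩ => ⟨hu.resolve_left fun ha => hAB u ha v hv h.symm, h⟩,
        fun ⟨hu, h⟩ => ⟨Or.inr hu, h⟩⟩
    exact this ▸ hB v hv

lemma isDissocSet_induce_iff {s : Set V} {R : Set s} :
    IsDissocSet (G.induce s) R ↔ IsDissocSet G (Subtype.val '' R) := by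
  have key : ∀ v : s, {u ∈ Subtype.val '' R | G.Adj v u} =
      Subtype.val '' {u ∈ R | (G.induce s).Adj v u} := by
    intro v
    ext x
    simp only [Set.mem_ofPred_eq, Set.mem_image, comap_adj, Function.Embedding.subtype_apply]
    constructor
    · rintro ⟨⟨u, hu, rfl⟩, h⟩
      exact ⟨u, ⟨hu, h⟩, rfl⟩
    · rintro ⟨u, ⟨hu, h⟩, rfl⟩
      exact ⟨⟨u, hu, rfl⟩, h⟩
  constructor
  · rintro h _ ⟨v, hv, rfl⟩
    rw [key, Set.ncard_image_of_injective _ Subtype.val_injective]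
    exact h v hv
  · intro h v hv
    rw [← Set.ncard_image_of_injective _ Subtype.val_injective, ← key]
    exact h v ⟨v, hv, rfl⟩

lemma IsMaximalDissocSet.mem_of_isDissocSet_insert {F : Set V} {v : V}
    (hF : IsMaximalDissocSet G F) (h : IsDissocSet G (insert v F)) : v ∈ F :=
  (hF.2 _ h (Set.subset_insert v F)) ▸ Set.mem_insert v F

variable [Finite V]

lemma IsDissocSet.mono {F F' : Set V} (hF : IsDissocSet G F) (h : F' ⊆ F) :
    IsDissocSet G F' :=
  fun v hv => (Set.ncard_le_ncard (t := {u ∈ F | G.Adj v u}) fun _ hu => ⟨h hu.1, hu.2⟩).trans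
    (hF v (h hv))

lemma IsDissocSet.eq_of_adj {F : Set V} (hF : IsDissocSet G F) {v x y : V} (hv : v ∈ F)
    (hx : x ∈ F) (hy : y ∈ F) (hvx : G.Adj v x) (hvy : G.Adj v y) : x = y :=
  (Set.ncard_le_one_iff).1 (hF v hv) ⟨hx, hvx⟩ ⟨hy, hvy⟩

lemma IsDissocSet.insert_of_neighborSet_eq {F : Set V} {v w : V} (hF : IsDissocSet G F)
    (hv : G.neighborSet v = {w}) (hw : w ∈ F → ∀ u ∈ F, ¬ G.Adj w u) :
    IsDissocSet G (insert v F) := by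
  have hadj : ∀ {x}, G.Adj v x ↔ x = w := fun {x} => Set.ext_iff.1 hv x
  rintro x (rfl | hx)
  · exact (Set.ncard_le_ncard fun u hu => hadj.1 hu.2).trans (Set.ncard_singleton w).le
  by_cases hxw : x = w
  · subst hxw
    refine (Set.ncard_le_ncard (t := {v}) ?_).trans (Set.ncard_singleton v).le
    rintro u ⟨rfl | hu, h⟩
    · rfl
    · exact absurd h (hw hx u hu)
  · refine (Set.ncard_le_ncard ?_).trans (hF x hx)
    rintro u ⟨rfl | hu, h⟩
    · exact absurd (hadj.1 h.symm) hxw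
    · exact ⟨hu, h⟩

lemma IsMaximalDissocSet.mem_of_neighborSet_eq {F : Set V} {v w : V}
    (hF : IsMaximalDissocSet G F) (hv : G.neighborSet v = {w}) (hw : w ∉ F) : v ∈ F :=
  hF.mem_of_isDissocSet_insert (hF.1.insert_of_neighborSet_eq hv fun h => absurd h hw)

lemma IsMaximalDissocSet.exists_adj_mem_of_neighborSet_eq {F : Set V} {v w : V}
    (hF : IsMaximalDissocSet G F) (hv : G.neighborSet v = {w}) :
    ∃ u ∈ F, G.Adj w u := by
  by_contra! h
  have hvw : G.Adj v w := by rw [← mem_neighborSet, hv]; rfl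
  exact h v (hF.mem_of_isDissocSet_insert (hF.1.insert_of_neighborSet_eq hv fun _ => h)) hvw.symm

lemma ncard_le_phiDel_of_inter_eq {S : Set (Set V)} {T F₀ : Set V}
    (hmax : ∀ F ∈ S, IsMaximalDissocSet G F) (hT : ∀ F ∈ S, F ∩ T = F₀)
    (hN : ∀ x ∈ F₀, G.neighborSet x ⊆ T) : S.ncard ≤ phiDel G T := by
  have hsplit : ∀ F ∈ S, F = Subtype.val '' (Subtype.val ⁻¹' F : Set ↥Tᶜ) ∪ F₀ := by
    intro F hF
    rw [Subtype.image_preimage_coe, ← hT F hF]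
    ext x
    by_cases hx : x ∈ T <;> simp [hx]
  unfold phiDel numMaximalDissoc
  refine Set.ncard_le_ncard_of_injOn (fun F => (Subtype.val ⁻¹' F : Set ↥Tᶜ)) ?_ ?_
  · intro F hF
    have hF₀ : F₀ ⊆ F := hT F hF ▸ Set.inter_subset_left
    refine ⟨isDissocSet_induce_iff.2 ((hmax F hF).1.mono (Set.image_preimage_subset _ _)),
      fun R hR hsub => ?_⟩
    have hlift : IsDissocSet G (Subtype.val '' R ∪ F₀) := by
      refine (isDissocSet_induce_iff.1 hR).union ((hmax F hF).1.mono hF₀) ?_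
      rintro _ ⟨a, -, rfl⟩ x hx hax
      exact a.2 (hN x hx hax.symm)
    have hF_eq := (hmax F hF).2 _ hlift
      ((hsplit F hF).trans_subset (Set.union_subset_union_left _ (Set.image_mono hsub)))
    have hF₀T : Subtype.val ⁻¹' F₀ = (∅ : Set ↥Tᶜ) :=
      Set.preimage_eq_empty (by
        rw [Subtype.range_coe, Set.disjoint_compl_right_iff_subset, ← hT F hF]
        exact Set.inter_subset_right)
    change Subtype.val ⁻¹' F = R
    rw [hF_eq, Set.preimage_union, Set.preimage_image_eq _ Subtype.val_injective, hF₀T,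
      Set.union_empty]
  · intro F hF F' hF' h
    rw [hsplit F hF, hsplit F' hF']
    exact congrArg (Subtype.val '' · ∪ F₀) h

lemma ncard_maximalDissoc_notMem_le {w v₁ v₂ : V} (hv₁ : G.neighborSet v₁ = {w})
    (hv₂ : G.neighborSet v₂ = {w}) :
    {F | IsMaximalDissocSet G F ∧ w ∉ F}.ncard ≤ phiDel G {w, v₁, v₂} := by
  refine ncard_le_phiDel_of_inter_eq (F₀ := {v₁, v₂}) (fun F hF => hF.1)
    (fun F ⟨hF, hw⟩ => ?_) ?_
  · have h₁ := hF.mem_of_neighborSet_eq hv₁ hw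
    have h₂ := hF.mem_of_neighborSet_eq hv₂ hw
    ext x
    simp only [Set.mem_inter_iff, Set.mem_insert_iff, Set.mem_singleton_iff]
    constructor
    · rintro ⟨hx, rfl | rfl | rfl⟩
      exacts [absurd hx hw, Or.inl rfl, Or.inr rfl]
    · rintro (rfl | rfl)
      exacts [⟨h₁, Or.inr (Or.inl rfl)⟩, ⟨h₂, Or.inr (Or.inr rfl)⟩]
  · rintro x (rfl | rfl)
    exacts [hv₁ ▸ Set.singleton_subset_iff.2 (Set.mem_insert w _),
      hv₂ ▸ Set.singleton_subset_iff.2 (Set.mem_insert w _)]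

lemma ncard_maximalDissoc_mem_mem_le {w u : V} (hwu : G.Adj w u) :
    {F | IsMaximalDissocSet G F ∧ w ∈ F ∧ u ∈ F}.ncard ≤
      phiDel G (insert w (G.neighborSet w) ∪ insert u (G.neighborSet u)) := by
  refine ncard_le_phiDel_of_inter_eq (F₀ := {w, u}) (fun F hF => hF.1)
    (fun F ⟨hF, hw, hu⟩ => ?_) ?_
  · ext x
    constructor
    · rintro ⟨hx, (rfl | hwx) | (rfl | hux)⟩
      · exact Or.inl rfl
      · exact Or.inr (hF.1.eq_of_adj hw hx hu hwx hwu)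
      · exact Or.inr rfl
      · exact Or.inl (hF.1.eq_of_adj hu hx hw hux hwu.symm)
    · rintro (rfl | rfl)
      exacts [⟨hw, Or.inl (Or.inl rfl)⟩, ⟨hu, Or.inr (Or.inl rfl)⟩]
  · rintro x (rfl | rfl)
    exacts [fun y hy => Or.inl (Or.inr hy), fun y hy => Or.inr (Or.inr hy)]

lemma numMaximalDissoc_le_of_neighborSet_eq {v w : V} [Fintype (G.neighborSet w)]
    (hv : G.neighborSet v = {w}) :
    numMaximalDissoc G ≤ {F | IsMaximalDissocSet G F ∧ w ∉ F}.ncard +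
      ∑ u ∈ G.neighborFinset w, {F | IsMaximalDissocSet G F ∧ w ∈ F ∧ u ∈ F}.ncard := by
  have hcover : {F | IsMaximalDissocSet G F} ⊆ {F | IsMaximalDissocSet G F ∧ w ∉ F} ∪
      ⋃ u ∈ G.neighborFinset w, {F | IsMaximalDissocSet G F ∧ w ∈ F ∧ u ∈ F} := by
    intro F hF
    by_cases hw : w ∈ F
    · obtain ⟨u, hu, hwu⟩ := hF.exists_adj_mem_of_neighborSet_eq hv
      exact Or.inr (Set.mem_iUnion₂.2 ⟨u, (G.mem_neighborFinset w u).2 hwu, hF, hw, hu⟩)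
    · exact Or.inl ⟨hF, hw⟩
  calc numMaximalDissoc G ≤ _ := Set.ncard_le_ncard hcover
    _ ≤ _ := Set.ncard_union_le _ _
    _ ≤ _ := add_le_add_right (Finset.set_ncard_biUnion_le _ _) _

end

theorem numMaximalDissoc_le_rec_of_two_leaves_general {V : Type*} [Fintype V] [DecidableEq V]
    (G : SimpleGraph V) [DecidableRel G.Adj] (w v₁ v₂ : V)
    (h₁ : G.Adj w v₁) (h₂ : G.Adj w v₂)
    (hd₁ : G.degree v₁ = 1) (hd₂ : G.degree v₂ = 1) :
    numMaximalDissoc G ≤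
      (∑ u ∈ G.neighborFinset w \ {v₁},
          phiDel G (insert w (G.neighborSet w) ∪ insert u (G.neighborSet u))) +
        phiDel G {w, v₁, v₂} + phiDel G (insert w (G.neighborSet w)) := by
  have hv₁ := neighborSet_eq_singleton_of_degree_eq_one h₁ hd₁
  have hv₂ := neighborSet_eq_singleton_of_degree_eq_one h₂ hd₂
  have hNv₁ : insert w (G.neighborSet w) ∪ insert v₁ (G.neighborSet v₁) =
      insert w (G.neighborSet w) := by
    rw [hv₁]
    exact Set.union_eq_self_of_subset_right
      (Set.insert_subset (Or.inr h₁) (Set.singleton_subset_iff.2 (Set.mem_insert w _)))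
  calc numMaximalDissoc G ≤ _ := numMaximalDissoc_le_of_neighborSet_eq hv₂
    _ ≤ phiDel G {w, v₁, v₂} + ∑ u ∈ G.neighborFinset w,
          phiDel G (insert w (G.neighborSet w) ∪ insert u (G.neighborSet u)) :=
      add_le_add (ncard_maximalDissoc_notMem_le hv₁ hv₂)
        (Finset.sum_le_sum fun u hu =>
          ncard_maximalDissoc_mem_mem_le ((G.mem_neighborFinset w u).1 hu))
    _ = _ := by
      rw [Finset.sum_eq_sum_sdiff_singleton_add ((G.mem_neighborFinset w v₁).2 h₁), hNv₁]
      ring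

theorem numMaximalDissoc_le_rec_of_two_leaves {V : Type*} [Fintype V] [DecidableEq V]
    (G : SimpleGraph V) [DecidableRel G.Adj] (w v₁ v₂ : V) (hne : v₁ ≠ v₂)
    (h₁ : G.Adj w v₁) (h₂ : G.Adj w v₂)
    (hd₁ : G.degree v₁ = 1) (hd₂ : G.degree v₂ = 1) :
    numMaximalDissoc G ≤
      (∑ u ∈ G.neighborFinset w \ {v₁},
          phiDel G (insert w (G.neighborSet w) ∪ insert u (G.neighborSet u))) +
        phiDel G {w, v₁, v₂} + phiDel G (insert w (G.neighborSet w)) :=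
  numMaximalDissoc_le_rec_of_two_leaves_general G w v₁ v₂ h₁ h₂ hd₁ hd₂
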